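/- arXiv:1907.05835 — 4 statements merged into one kernel-verified Lean document; each statement's English description precedes it below -/
import Mathlib

section
/- For any finite nonempty set F ⊂ ℕ with maximum element j, the product function f = ∏_{m ∈ F} u_m on the Cantor space has Lipschitz constant exactly 2^(j+1). -/
open scoped ENNReal

abbrev Cantor : Type := ℕ → Fin 2

noncomputable def u (n : ℕ) (x : Cantor) : ℂ := 2 * ((x n : ℕ) : ℂ) - 1

noncomputable def firstDiff (x y : Cantor) (h : x ≠ y) : ℕ :=
  Nat.find (Function.ne_iff.mp h)

open Classical in
noncomputable def dC (x y : Cantor) : ℝ≥0∞ :=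
  if h : x = y then 0 else 2⁻¹ ^ firstDiff x y h

noncomputable def LipC (f : Cantor → ℂ) : ℝ≥0∞ :=
  ⨆ (x : Cantor) (y : Cantor) (_ : x ≠ y),
    ENNReal.ofReal ‖f x - f y‖ / dC x y

/-! The product has norm 1 and depends only on the coordinates up to `j`, so two points where it
differs are at distance at least `2⁻¹ ^ j` and the difference quotient is at most `2 * 2 ^ j`.
Flipping coordinate `j` of the zero sequence changes the sign of the product at distance exactly
`2⁻¹ ^ j`, so the bound is attained. -/

lemma u_of_eq_zero {n : ℕ} {x : Cantor} (h : x n = 0) : u n x = -1 := by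
  simp [u, h]

lemma u_of_eq_one {n : ℕ} {x : Cantor} (h : x n = 1) : u n x = 1 := by
  norm_num [u, h]

lemma norm_u (n : ℕ) (x : Cantor) : ‖u n x‖ = 1 := by
  rcases Fin.exists_fin_two.mp ⟨x n, rfl⟩ with h | h
  · simp [u_of_eq_zero h]
  · simp [u_of_eq_one h]

lemma norm_prod_u (F : Finset ℕ) (x : Cantor) : ‖∏ m ∈ F, u m x‖ = 1 := by
  simp [norm_u]

lemma norm_prod_u_sub_le (F : Finset ℕ) (x y : Cantor) :
    ‖∏ m ∈ F, u m x - ∏ m ∈ F, u m y‖ ≤ 2 :=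
  calc _ ≤ ‖∏ m ∈ F, u m x‖ + ‖∏ m ∈ F, u m y‖ := norm_sub_le _ _
    _ = 2 := by rw [norm_prod_u, norm_prod_u]; norm_num

lemma dependsOn_prod_u (F : Finset ℕ) : DependsOn (fun x : Cantor => ∏ m ∈ F, u m x) F :=
  fun _ _ h => Finset.prod_congr rfl fun m hm => by rw [u, u, h m hm]

lemma prod_u_single_eq_neg {F : Finset ℕ} {j : ℕ} (hj : j ∈ F) :
    ∏ m ∈ F, u m (Pi.single j 1) = -∏ m ∈ F, u m 0 := by
  have hrest : ∏ m ∈ F.erase j, u m (Pi.single j 1) = ∏ m ∈ F.erase j, u m 0 :=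
    dependsOn_prod_u _ fun m hm => Pi.single_eq_of_ne (Finset.ne_of_mem_erase hm) _
  rw [← Finset.prod_erase_mul F _ hj, ← Finset.prod_erase_mul F _ hj, hrest,
    u_of_eq_one (Pi.single_eq_same j _), u_of_eq_zero rfl]
  ring

lemma norm_prod_u_sub_prod_u_single {F : Finset ℕ} {j : ℕ} (hj : j ∈ F) :
    ‖∏ m ∈ F, u m 0 - ∏ m ∈ F, u m (Pi.single j 1)‖ = 2 := by
  rw [prod_u_single_eq_neg hj, sub_neg_eq_add, ← two_mul, norm_mul, norm_prod_u]
  simp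

lemma firstDiff_le {x y : Cantor} (h : x ≠ y) {m : ℕ} (hm : x m ≠ y m) :
    firstDiff x y h ≤ m :=
  Nat.find_min' _ hm

lemma firstDiff_zero_single (j : ℕ) (h : (0 : Cantor) ≠ Pi.single j 1) :
    firstDiff 0 (Pi.single j 1) h = j := by
  rw [firstDiff, Nat.find_eq_iff]
  refine ⟨by simp, fun i hi => ?_⟩
  simp [Pi.single_eq_of_ne hi.ne]

lemma div_dC {x y : Cantor} (h : x ≠ y) (a : ℝ≥0∞) :
    a / dC x y = a * 2 ^ firstDiff x y h := by
  rw [dC, dif_neg h, div_eq_mul_inv, ← ENNReal.inv_pow, inv_inv]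

lemma le_lipC (f : Cantor → ℂ) {x y : Cantor} (h : x ≠ y) :
    ENNReal.ofReal ‖f x - f y‖ / dC x y ≤ LipC f :=
  le_iSup₂_of_le x y (le_iSup_of_le h le_rfl)

lemma lipC_le_of_dependsOn_Iic {f : Cantor → ℂ} {j : ℕ} {C : ℝ}
    (hf : DependsOn f (Set.Iic j)) (hC : ∀ x y, ‖f x - f y‖ ≤ C) :
    LipC f ≤ ENNReal.ofReal C * 2 ^ j := by
  refine iSup₂_le fun x y => iSup_le fun hxy => ?_
  by_cases hxy_j : ∀ i ∈ Set.Iic j, x i = y i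
  · simp [hf hxy_j]
  · obtain ⟨i, hij, hi⟩ : ∃ i ≤ j, x i ≠ y i := by simpa using hxy_j
    rw [div_dC hxy]
    gcongr
    · exact hC x y
    · exact one_le_two
    · exact (firstDiff_le hxy hi).trans hij

theorem lip_prod_u (F : Finset ℕ) (hF : F.Nonempty) :
    LipC (fun x => ∏ m ∈ F, u m x) = 2 ^ (F.max' hF + 1) := by
  set j := F.max' hF
  have hne : (0 : Cantor) ≠ Pi.single j 1 := fun h => by simpa using congrFun h j
  apply le_antisymm
  · calc LipC (fun x => ∏ m ∈ F, u m x)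
        ≤ ENNReal.ofReal 2 * 2 ^ j :=
          lipC_le_of_dependsOn_Iic ((dependsOn_prod_u F).mono fun m hm => F.le_max' m hm)
            (norm_prod_u_sub_le F)
      _ = 2 ^ (j + 1) := by rw [ENNReal.ofReal_ofNat, pow_succ']
  · calc (2 : ℝ≥0∞) ^ (j + 1)
        = ENNReal.ofReal ‖∏ m ∈ F, u m 0 - ∏ m ∈ F, u m (Pi.single j 1)‖ /
            dC 0 (Pi.single j 1) := by
          rw [norm_prod_u_sub_prod_u_single (F.max'_mem hF), div_dC hne,
            firstDiff_zero_single j hne, ENNReal.ofReal_ofNat, pow_succ']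
      _ ≤ LipC (fun x => ∏ m ∈ F, u m x) := le_lipC _ hne
end

section
/- Fix x ≠ y in 𝒞 with first disagreement index k, and fix n > k. Let C_k be the set of nonempty subsets F ⊆ {0,...,n-1} with max F > k. Let C_k' = {F ∈ C_k : (∏_{m∈F}u_m)(x) ≠ (∏_{m∈F}u_m)(y)} and C_k'' = C_k \ C_k'. Then the map F ↦ F △ {k} is a well-defined bijection from C_k' to C_k''; in particular |C_k'| = |C_k''| = 2^(n-1) - 2^k. -/
open scoped ENNReal

/-!
Let `k` be the first index where `x` and `y` differ, so `u k x = -u k y`. As `u k ^ 2 = 1`,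
toggling `k` multiplies `∏ m ∈ F, u m` by `u k`, hence multiplies the two products at `x` and
at `y` by opposite signs; since both products are `±1`, this swaps "equal" and "different".
Toggling `k < n` is an involution that keeps `F ⊆ range n` and keeps an element above `k`, so it
is a bijection `C_k' → C_k''`. Both halves of `C_k` therefore have `(2 ^ n - 2 ^ (k + 1)) / 2`
elements, `C_k` being the subsets of `range n` not contained in `range (k + 1)`.
-/

open Finset

theorem ne_iff_eq_neg_of_mul_self_eq {R : Type*} [CommRing R] [NoZeroDivisors R]
    [NeZero (2 : R)] {a b : R} (hab : a * a = b * b) (ha : a ≠ 0) : a ≠ b ↔ a = -b := by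
  refine ⟨(mul_self_eq_mul_self_iff.mp hab).resolve_left, fun hneg heq => ha ?_⟩
  have h2a : 2 * a = 0 := by linear_combination hneg + heq
  exact (mul_eq_zero.mp h2a).resolve_left two_ne_zero

theorem Finset.prod_symmDiff_singleton {α M : Type*} [DecidableEq α] [CommMonoid M]
    {f : α → M} {a : α} (ha : f a * f a = 1) (s : Finset α) :
    ∏ i ∈ symmDiff s {a}, f i = f a * ∏ i ∈ s, f i := by
  by_cases has : a ∈ s
  · rw [symmDiff_of_ge (singleton_subset_iff.mpr has), sdiff_singleton_eq_erase,
      ← mul_prod_erase s f has, ← mul_assoc, ha, one_mul]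
  · rw [(disjoint_singleton_right.mpr has).symmDiff_eq_sup, sup_eq_union, union_comm,
      ← insert_eq, prod_insert has]

theorem Finset.coe_lt_max_iff {α : Type*} [LinearOrder α] {s : Finset α} {a : α} :
    (a : WithBot α) < s.max ↔ ∃ b ∈ s, a < b :=
  Finset.lt_sup_iff.trans <| exists_congr fun _ => and_congr_right fun _ => WithBot.coe_lt_coe

theorem Finset.coe_lt_max_symmDiff_singleton {α : Type*} [LinearOrder α] {s : Finset α} {a : α}
    (h : (a : WithBot α) < s.max) : (a : WithBot α) < (symmDiff s {a}).max := by
  obtain ⟨b, hbs, hab⟩ := coe_lt_max_iff.mp h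
  exact coe_lt_max_iff.mpr ⟨b, mem_symmDiff.mpr (.inl ⟨hbs, by simpa using hab.ne'⟩), hab⟩

theorem ncard_setOf_subset_range_coe_lt_max {k n : ℕ} (hkn : k < n) :
    {F : Finset ℕ | F ⊆ range n ∧ (k : WithBot ℕ) < F.max}.ncard = 2 ^ n - 2 ^ (k + 1) := by
  have hset : {F : Finset ℕ | F ⊆ range n ∧ (k : WithBot ℕ) < F.max} =
      ↑((range n).powerset \ (range (k + 1)).powerset) := by
    ext F
    simp only [Set.mem_ofPred_eq, coe_sdiff, coe_powerset, Set.mem_sdiff, Set.mem_preimage,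
      Set.mem_powerset_iff, coe_subset]
    refine and_congr_right fun _ => coe_lt_max_iff.trans ?_
    simp [subset_iff]
  rw [hset, Set.ncard_coe_finset,
    card_sdiff_of_subset (powerset_mono.mpr (range_subset_range.mpr hkn)),
    card_powerset, card_powerset, card_range, card_range]

theorem ncard_not_add_ncard_setOf_subset_range_coe_lt_max {k n : ℕ} (hkn : k < n)
    (p : Finset ℕ → Prop) :
    {F : Finset ℕ | F ⊆ range n ∧ (k : WithBot ℕ) < F.max ∧ ¬p F}.ncard +
      {F : Finset ℕ | F ⊆ range n ∧ (k : WithBot ℕ) < F.max ∧ p F}.ncard =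
      2 ^ n - 2 ^ (k + 1) := by
  have hfin : {F : Finset ℕ | F ⊆ range n}.Finite :=
    (range n).powerset.finite_toSet.subset fun _ => mem_powerset.mpr
  rw [← Set.ncard_union_eq (Set.disjoint_left.mpr fun F hF hF' => hF.2.2 hF'.2.2)
    (hfin.subset fun F hF => hF.1) (hfin.subset fun F hF => hF.1),
    ← ncard_setOf_subset_range_coe_lt_max hkn]
  congr 1
  ext F
  simp only [Set.mem_union, Set.mem_ofPred_eq]
  tauto

theorem u_mul_self (m : ℕ) (x : Cantor) : u m x * u m x = 1 := by
  unfold u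
  generalize x m = a
  fin_cases a <;> norm_num

theorem prod_u_mul_self (F : Finset ℕ) (x : Cantor) :
    (∏ m ∈ F, u m x) * ∏ m ∈ F, u m x = 1 := by
  rw [← prod_mul_distrib]
  exact prod_eq_one fun m _ => u_mul_self m x

section Cantor

variable {x y : Cantor} {k n : ℕ}

theorem u_firstDiff (hxy : x ≠ y) :
    u (firstDiff x y hxy) x = -u (firstDiff x y hxy) y := by
  have hne : x (firstDiff x y hxy) ≠ y (firstDiff x y hxy) :=
    Nat.find_spec (Function.ne_iff.mp hxy)
  unfold u
  revert hne
  generalize x (firstDiff x y hxy) = a, y (firstDiff x y hxy) = b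
  fin_cases a <;> fin_cases b <;> norm_num

theorem prod_u_symmDiff_eq_iff (hk : u k x = -u k y) (F : Finset ℕ) :
    (∏ m ∈ symmDiff F {k}, u m x) = ∏ m ∈ symmDiff F {k}, u m y ↔
      (∏ m ∈ F, u m x) ≠ ∏ m ∈ F, u m y := by
  rw [prod_symmDiff_singleton (f := (u · x)) (u_mul_self k x),
    prod_symmDiff_singleton (f := (u · y)) (u_mul_self k y), hk,
    neg_mul, ← mul_neg, mul_right_inj' (left_ne_zero_of_mul_eq_one (u_mul_self k y)),
    ne_iff_eq_neg_of_mul_self_eq ((prod_u_mul_self F x).trans (prod_u_mul_self F y).symm)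
      (left_ne_zero_of_mul_eq_one (prod_u_mul_self F x)), neg_eq_iff_eq_neg]

theorem bijOn_symmDiff_singleton_of_u_eq_neg (hk : u k x = -u k y) (hkn : k < n) :
    Set.BijOn (fun F => symmDiff F {k})
      {F : Finset ℕ | F ⊆ range n ∧ (k : WithBot ℕ) < F.max ∧
        (∏ m ∈ F, u m x) ≠ ∏ m ∈ F, u m y}
      {F : Finset ℕ | F ⊆ range n ∧ (k : WithBot ℕ) < F.max ∧
        (∏ m ∈ F, u m x) = ∏ m ∈ F, u m y} := by
  have hsub (F : Finset ℕ) (hF : F ⊆ range n) : symmDiff F {k} ⊆ range n :=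
    symmDiff_le_sup.trans (union_subset hF (singleton_subset_iff.mpr (mem_range.mpr hkn)))
  have hflip_ne (F : Finset ℕ) (h : (∏ m ∈ F, u m x) = ∏ m ∈ F, u m y) :
      (∏ m ∈ symmDiff F {k}, u m x) ≠ ∏ m ∈ symmDiff F {k}, u m y :=
    (prod_u_symmDiff_eq_iff hk _).mp (by rwa [symmDiff_symmDiff_cancel_right])
  exact Set.InvOn.bijOn ⟨fun F _ => symmDiff_symmDiff_cancel_right _ _,
      fun F _ => symmDiff_symmDiff_cancel_right _ _⟩
    (fun F ⟨hF, hmax, hne⟩ =>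
      ⟨hsub F hF, coe_lt_max_symmDiff_singleton hmax, (prod_u_symmDiff_eq_iff hk F).mpr hne⟩)
    (fun F ⟨hF, hmax, heq⟩ =>
      ⟨hsub F hF, coe_lt_max_symmDiff_singleton hmax, hflip_ne F heq⟩)

end Cantor

theorem symmDiff_bijOn (x y : Cantor) (hxy : x ≠ y) (n : ℕ)
    (hn : firstDiff x y hxy < n) :
    Set.BijOn (fun F => symmDiff F {firstDiff x y hxy})
      {F : Finset ℕ | F ⊆ Finset.range n ∧ (firstDiff x y hxy : WithBot ℕ) < F.max ∧
        (∏ m ∈ F, u m x) ≠ ∏ m ∈ F, u m y}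
      {F : Finset ℕ | F ⊆ Finset.range n ∧ (firstDiff x y hxy : WithBot ℕ) < F.max ∧
        (∏ m ∈ F, u m x) = ∏ m ∈ F, u m y} ∧
    {F : Finset ℕ | F ⊆ Finset.range n ∧ (firstDiff x y hxy : WithBot ℕ) < F.max ∧
        (∏ m ∈ F, u m x) ≠ ∏ m ∈ F, u m y}.ncard
      = 2 ^ (n - 1) - 2 ^ firstDiff x y hxy ∧
    {F : Finset ℕ | F ⊆ Finset.range n ∧ (firstDiff x y hxy : WithBot ℕ) < F.max ∧
        (∏ m ∈ F, u m x) = ∏ m ∈ F, u m y}.ncard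
      = 2 ^ (n - 1) - 2 ^ firstDiff x y hxy := by
  have hbij := bijOn_symmDiff_singleton_of_u_eq_neg (u_firstDiff hxy) hn
  have htotal := ncard_not_add_ncard_setOf_subset_range_coe_lt_max hn
    fun F => (∏ m ∈ F, u m x) = ∏ m ∈ F, u m y
  simp only [← ne_eq, ← hbij.ncard_eq] at htotal
  set k := firstDiff x y hxy
  have hpow : 2 ^ n - 2 ^ (k + 1) = 2 * (2 ^ (n - 1) - 2 ^ k) := by
    rw [Nat.mul_sub, ← pow_succ', ← pow_succ', Nat.sub_add_cancel (by omega)]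
  exact ⟨hbij, by omega, by rw [← hbij.ncard_eq]; omega⟩
end

section
/- The Lipschitz seminorm of f = 4u_0 + u_1 + u_0u_1 on the Cantor space equals 10, while the quantity L'(f) = max{2‖f - E_0 f‖_∞, 4‖f - E_1 f‖_∞} (with E_0 f = 0, E_1 f = 4u_0) equals 12; hence the two seminorms differ on this element. -/
/-!
The function `f = 4u₀ + u₁ + u₀u₁` depends only on the first two coordinates, where `u₀, u₁ = ±1`.
Two points whose first coordinates differ are at distance `1`, and `f` varies by at most `10`
there, with `10` attained at the constant sequences; two points agreeing at coordinate `0` only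
are at distance `1/2`, and `f` then varies by at most `4`, giving ratio at most `8`. Hence
`L(f) = 10`. On the other hand `‖f‖_∞ = 6` and `‖f - 4u₀‖_∞ = ‖u₁ + u₀u₁‖_∞ = 2`, so
`L'(f) = max (2 * 6) (4 * 2) = 12`.
-/

open scoped ENNReal

noncomputable def supNorm (g : Cantor → ℂ) : ℝ := ⨆ x : Cantor, ‖g x‖

lemma u_eq_neg_one_or_one (n : ℕ) (x : Cantor) : u n x = -1 ∨ u n x = 1 := by
  rcases Fin.exists_fin_two.mp ⟨x n, rfl⟩ with h | h <;> norm_num [u, h]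

lemma u_congr (n : ℕ) {x y : Cantor} (h : x n = y n) : u n x = u n y := by
  simp [u, h]

lemma u_const_one (n : ℕ) : u n (fun _ => 1) = 1 := by
  norm_num [u]

lemma u_const_zero (n : ℕ) : u n (fun _ => 0) = -1 := by
  norm_num [u]

section CantorMetric

variable {x y : Cantor}

lemma dC_of_ne (h : x ≠ y) : dC x y = 2⁻¹ ^ firstDiff x y h :=
  dif_neg h

lemma apply_eq_of_lt_firstDiff (h : x ≠ y) {k : ℕ} (hk : k < firstDiff x y h) : x k = y k :=
  not_not.mp (Nat.find_min (Function.ne_iff.mp h) hk)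

lemma LipC_le_ofReal {f : Cantor → ℂ} {C : ℝ} (hC : 0 ≤ C)
    (hf : ∀ x y (h : x ≠ y), ‖f x - f y‖ ≤ C * 2⁻¹ ^ firstDiff x y h) :
    LipC f ≤ ENNReal.ofReal C := by
  refine iSup₂_le fun x y => iSup_le fun h => ENNReal.div_le_of_le_mul ?_
  calc ENNReal.ofReal ‖f x - f y‖ ≤ ENNReal.ofReal (C * 2⁻¹ ^ firstDiff x y h) :=
        ENNReal.ofReal_le_ofReal (hf x y h)
    _ = ENNReal.ofReal C * dC x y := by
        rw [dC_of_ne h, ENNReal.ofReal_mul hC, ENNReal.ofReal_pow (by norm_num),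
          ENNReal.ofReal_inv_of_pos (by norm_num), ENNReal.ofReal_ofNat]

lemma le_LipC (f : Cantor → ℂ) (h : x ≠ y) : ENNReal.ofReal ‖f x - f y‖ / dC x y ≤ LipC f :=
  le_iSup₂_of_le x y (le_iSup_of_le h le_rfl)

end CantorMetric

lemma supNorm_eq_of_le_of_eq {g : Cantor → ℂ} {c : ℝ} (hle : ∀ x, ‖g x‖ ≤ c) (x₀ : Cantor)
    (hx₀ : ‖g x₀‖ = c) : supNorm g = c :=
  le_antisymm (ciSup_le hle) (hx₀ ▸ le_ciSup ⟨c, Set.forall_mem_range.mpr hle⟩ x₀)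

def signPoly (a b : ℂ) : ℂ := 4 * a + b + a * b

section SignPoly

variable {a b c d : ℂ} (ha : a = -1 ∨ a = 1) (hb : b = -1 ∨ b = 1)
include ha hb

lemma norm_signPoly_le : ‖signPoly a b‖ ≤ 6 := by
  rcases ha with rfl | rfl <;> rcases hb with rfl | rfl <;> norm_num [signPoly]

lemma norm_signPoly_sub_four_mul_le : ‖signPoly a b - 4 * a‖ ≤ 2 := by
  rcases ha with rfl | rfl <;> rcases hb with rfl | rfl <;> norm_num [signPoly]

lemma norm_signPoly_sub_signPoly_le (hc : c = -1 ∨ c = 1) (hd : d = -1 ∨ d = 1) :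
    ‖signPoly a b - signPoly c d‖ ≤ 10 := by
  rcases ha with rfl | rfl <;> rcases hb with rfl | rfl <;> rcases hc with rfl | rfl <;>
    rcases hd with rfl | rfl <;> norm_num [signPoly]

lemma norm_signPoly_sub_signPoly_left_le (hd : d = -1 ∨ d = 1) :
    ‖signPoly a b - signPoly a d‖ ≤ 4 := by
  rcases ha with rfl | rfl <;> rcases hb with rfl | rfl <;> rcases hd with rfl | rfl <;>
    norm_num [signPoly]

end SignPoly

lemma LipC_signPoly : LipC (fun x => signPoly (u 0 x) (u 1 x)) = 10 := by
  have hu := u_eq_neg_one_or_one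
  apply le_antisymm
  · rw [← ENNReal.ofReal_ofNat]
    refine LipC_le_ofReal (by norm_num) fun x y h => ?_
    have h₀ := fun hk => u_congr 0 (apply_eq_of_lt_firstDiff h (k := 0) hk)
    have h₁ := fun hk => u_congr 1 (apply_eq_of_lt_firstDiff h (k := 1) hk)
    obtain hm | hm | hm : firstDiff x y h = 0 ∨ firstDiff x y h = 1 ∨ 2 ≤ firstDiff x y h := by
      omega
    · simpa [hm] using norm_signPoly_sub_signPoly_le (hu 0 x) (hu 1 x) (hu 0 y) (hu 1 y)
    · rw [hm, h₀ (by omega)]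
      linarith [norm_signPoly_sub_signPoly_left_le (hu 0 y) (hu 1 x) (hu 1 y)]
    · rw [h₀ (by omega), h₁ (by omega), sub_self, norm_zero]
      positivity
  · have hne : (fun _ => 1 : Cantor) ≠ fun _ => 0 := fun h => by simpa using congrFun h 0
    have hm : firstDiff _ _ hne = 0 := (Nat.find_eq_zero _).mpr (by simp)
    calc (10 : ℝ≥0∞)
        = ENNReal.ofReal ‖signPoly (u 0 fun _ => 1) (u 1 fun _ => 1)
            - signPoly (u 0 fun _ => 0) (u 1 fun _ => 0)‖ / dC (fun _ => 1) (fun _ => 0) := by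
          rw [dC_of_ne hne, hm]
          norm_num [u_const_one, u_const_zero, signPoly]
      _ ≤ _ := le_LipC (fun x => signPoly (u 0 x) (u 1 x)) hne

theorem lip_norms_differ :
    LipC (fun x => 4 * u 0 x + u 1 x + u 0 x * u 1 x) = 10 ∧
    max (2 * supNorm (fun x => (4 * u 0 x + u 1 x + u 0 x * u 1 x) - 0))
        (4 * supNorm (fun x => (4 * u 0 x + u 1 x + u 0 x * u 1 x) - 4 * u 0 x)) = 12 := by
  have hu := u_eq_neg_one_or_one
  have hsup : supNorm (fun x => 4 * u 0 x + u 1 x + u 0 x * u 1 x) = 6 :=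
    supNorm_eq_of_le_of_eq (fun x => norm_signPoly_le (hu 0 x) (hu 1 x)) (fun _ => 1)
      (by norm_num [u_const_one])
  have hsup' : supNorm (fun x => 4 * u 0 x + u 1 x + u 0 x * u 1 x - 4 * u 0 x) = 2 :=
    supNorm_eq_of_le_of_eq (fun x => norm_signPoly_sub_four_mul_le (hu 0 x) (hu 1 x))
      (fun _ => 1) (by norm_num [u_const_one])
  simp only [sub_zero, hsup, hsup']
  exact ⟨LipC_signPoly, by norm_num⟩
end

section
/- For any α_0, α_1, α_2 ∈ ℂ, letting M₁ = max{2|α_0-α_2|, 2|α_0-α_1|, 2|α_0+α_1|, 2|α_0+α_2|, 4|α_1-α_2|, 4|α_1+α_2|} and M₂ = max{2|α_0+α_1-α_2|, 2|α_0-α_1+α_2|, 2|α_0-α_1-α_2|, 2|α_0+α_1+α_2|, 4|α_1-α_2|, 4|α_1+α_2|}, it holds that M₁ ≤ M₂ ≤ 2M₁. -/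
/-- `M₁` of the statement: the Lipschitz seminorm of `α₀ u₀ + α₁ u₁ + α₂ u₀ u₁`. -/
noncomputable def lipSeminormA2 (α₀ α₁ α₂ : ℂ) : ℝ :=
  max (max (max (2 * ‖α₀ - α₂‖) (2 * ‖α₀ - α₁‖)) (max (2 * ‖α₀ + α₁‖) (2 * ‖α₀ + α₂‖)))
    (max (4 * ‖α₁ - α₂‖) (4 * ‖α₁ + α₂‖))

/-- `M₂` of the statement: the quantum-metric Lip-norm of `α₀ u₀ + α₁ u₁ + α₂ u₀ u₁`. -/
noncomputable def quantumLipNormA2 (α₀ α₁ α₂ : ℂ) : ℝ :=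
  max (max (max (2 * ‖α₀ + α₁ - α₂‖) (2 * ‖α₀ - α₁ + α₂‖))
      (max (2 * ‖α₀ - α₁ - α₂‖) (2 * ‖α₀ + α₁ + α₂‖)))
    (max (4 * ‖α₁ - α₂‖) (4 * ‖α₁ + α₂‖))

lemma RCLike.two_mul_norm_le_of_add_eq_two_mul {𝕜 : Type*} [RCLike 𝕜] {x y z : 𝕜}
    (h : x + y = 2 * z) : 2 * ‖z‖ ≤ ‖x‖ + ‖y‖ := by
  simpa only [h, norm_mul, RCLike.norm_two] using norm_add_le x y

lemma RCLike.two_mul_norm_le_norm_sub_add_norm_add {𝕜 : Type*} [RCLike 𝕜] (u v : 𝕜) : 2 * ‖u‖ ≤ ‖u - v‖ + ‖u + v‖ :=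
  RCLike.two_mul_norm_le_of_add_eq_two_mul (by ring)

section

variable (α₀ α₁ α₂ : ℂ)

lemma lipSeminormA2_le_quantumLipNormA2 : lipSeminormA2 α₀ α₁ α₂ ≤ quantumLipNormA2 α₀ α₁ α₂ := by
  have h := le_refl (quantumLipNormA2 α₀ α₁ α₂)
  conv_lhs at h => unfold quantumLipNormA2
  obtain ⟨⟨⟨hb₁, hb₂⟩, hb₃, hb₄⟩, hc₁, hc₂⟩ := by simpa only [max_le_iff] using h
  set M₂ := quantumLipNormA2 α₀ α₁ α₂
  -- Each `α₀ ± αᵢ` is the midpoint of two of the four points `α₀ ± α₁ ± α₂`.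
  have midpoint {x y z : ℂ} (hz : x + y = 2 * z) (hx : 2 * ‖x‖ ≤ M₂) (hy : 2 * ‖y‖ ≤ M₂) :
      2 * ‖z‖ ≤ M₂ := by
    linarith [RCLike.two_mul_norm_le_of_add_eq_two_mul hz]
  exact max_le (max_le (max_le (midpoint (by ring) hb₁ hb₃) (midpoint (by ring) hb₂ hb₃))
    (max_le (midpoint (by ring) hb₁ hb₄) (midpoint (by ring) hb₂ hb₄))) (max_le hc₁ hc₂)

lemma quantumLipNormA2_le_two_mul_lipSeminormA2 :
    quantumLipNormA2 α₀ α₁ α₂ ≤ 2 * lipSeminormA2 α₀ α₁ α₂ := by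
  have h := le_refl (lipSeminormA2 α₀ α₁ α₂)
  conv_lhs at h => unfold lipSeminormA2
  obtain ⟨⟨⟨-, ha₂⟩, ha₃, ha₄⟩, hc₁, hc₂⟩ := by simpa only [max_le_iff] using h
  -- Each `α₀ ± α₁ ± α₂` is some `α₀ ± αᵢ` shifted by `±αⱼ`,
  -- and `2‖αⱼ‖ ≤ ‖α₁ - α₂‖ + ‖α₁ + α₂‖ ≤ M₁ / 2`.
  have hα₁ := RCLike.two_mul_norm_le_norm_sub_add_norm_add α₁ α₂
  have hα₂ := RCLike.two_mul_norm_le_norm_sub_add_norm_add α₂ α₁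
  rw [norm_sub_rev, add_comm α₂] at hα₂
  have hc_nonneg : 0 ≤ ‖α₁ - α₂‖ := norm_nonneg _
  refine max_le (max_le (max_le ?_ ?_) (max_le ?_ ?_)) (max_le ?_ ?_)
  · linarith [norm_sub_le (α₀ + α₁) α₂]
  · linarith [norm_add_le (α₀ - α₁) α₂]
  · linarith [norm_sub_le (α₀ - α₁) α₂]
  · linarith [norm_add_le (α₀ + α₁) α₂]
  · linarith
  · linarith

end

theorem lip_norms_equivalent_A2 (α₀ α₁ α₂ : ℂ) :
    max (max (max (2 * ‖α₀ - α₂‖) (2 * ‖α₀ - α₁‖))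
        (max (2 * ‖α₀ + α₁‖) (2 * ‖α₀ + α₂‖)))
      (max (4 * ‖α₁ - α₂‖) (4 * ‖α₁ + α₂‖)) ≤
      max (max (max (2 * ‖α₀ + α₁ - α₂‖) (2 * ‖α₀ - α₁ + α₂‖))
          (max (2 * ‖α₀ - α₁ - α₂‖) (2 * ‖α₀ + α₁ + α₂‖)))
        (max (4 * ‖α₁ - α₂‖) (4 * ‖α₁ + α₂‖)) ∧
    max (max (max (2 * ‖α₀ + α₁ - α₂‖) (2 * ‖α₀ - α₁ + α₂‖))
        (max (2 * ‖α₀ - α₁ - α₂‖) (2 * ‖α₀ + α₁ + α₂‖)))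
      (max (4 * ‖α₁ - α₂‖) (4 * ‖α₁ + α₂‖)) ≤
      2 * max (max (max (2 * ‖α₀ - α₂‖) (2 * ‖α₀ - α₁‖))
          (max (2 * ‖α₀ + α₁‖) (2 * ‖α₀ + α₂‖)))
        (max (4 * ‖α₁ - α₂‖) (4 * ‖α₁ + α₂‖)) :=
  ⟨lipSeminormA2_le_quantumLipNormA2 α₀ α₁ α₂, quantumLipNormA2_le_two_mul_lipSeminormA2 α₀ α₁ α₂⟩
end
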